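/- If e ∈ Win_a([p,Q]^ε_a) in the weak spectroscopy energy game G△, then there exists a delayed formula χ ∈ Strat([p,Q]^ε_a, e) with expr^ε(χ) ≤ e. -/

import Mathlib

open Classical

noncomputable section

namespace Spectroscopy

/-! ### Energies and declining energy games -/

/-- Energies: 8-dimensional vectors over `ℕ ∪ {∞}`, ordered componentwise. -/
abbrev Energy : Type := Fin 8 → ℕ∞

/-- The `i`-th unit vector. -/
def unitE (i : Fin 8) : Energy := fun k => if k = i then 1 else 0

/-- The vector with value `v` at position `i` and `0` elsewhere. -/
def onlyAt (i : Fin 8) (v : ℕ∞) : Energy := fun k => if k = i then v else 0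

/-- Components of energy updates: `-1`, `0`, or minimum selection `min_D`.
For the component at position `k`, `minWith D` selects the minimum over the
positions `{k} ∪ D`, so the requirement `k ∈ D` of the paper holds by
construction. -/
inductive UpdComp : Type
  | decr : UpdComp
  | zero : UpdComp
  | minWith (D : Finset (Fin 8)) : UpdComp
deriving DecidableEq

/-- Energy updates. -/
abbrev Update : Type := Fin 8 → UpdComp

/-- Partial application of an update to an energy (`none` when a component
would become negative). -/
def upd (e : Energy) (u : Update) : Option Energy :=
  if ∀ k, u k = UpdComp.decr → e k ≠ 0 then
    some (fun k =>
      match u k with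
      | UpdComp.decr => e k - 1
      | UpdComp.zero => e k
      | UpdComp.minWith D => (insert k D).inf e)
  else none

/-- A declining energy game: positions, a defender predicate (attacker
positions are the non-defender ones), and moves labeled with updates. -/
structure EGame (Pos : Type) where
  defender : Pos → Prop
  move : Pos → Update → Pos → Prop

/-- Attacker winning budgets `Win_a`: at an attacker position some move must
lead to an attacker-won position under the updated energy; at a defender
position every move must (be defined and) lead to an attacker-won position. -/
inductive EGame.Win {Pos : Type} (G : EGame Pos) : Pos → Energy → Prop
  | attack {g : Pos} {u : Update} {g' : Pos} {e e' : Energy} :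
      ¬ G.defender g → G.move g u g' → upd e u = some e' → G.Win g' e' →
      G.Win g e
  | defend {g : Pos} {e : Energy} :
      G.defender g →
      (∀ u g', G.move g u g' → upd e u ≠ none) →
      (∀ u g' e', G.move g u g' → upd e u = some e' → G.Win g' e') →
      G.Win g e

/-! ### Labeled transition systems with silent steps -/

section LTS

variable {Proc Act : Type}

/-- Weak internal steps `↠`: reflexive-transitive closure of `τ`-steps. -/
def Star (Tr : Proc → Act → Proc → Prop) (τ : Act) : Proc → Proc → Prop :=
  Relation.ReflTransGen fun p p' => Tr p τ p'

/-- A process is stable if it has no `τ`-step. -/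
def Stable (Tr : Proc → Act → Proc → Prop) (τ : Act) (p : Proc) : Prop :=
  ∀ p', ¬ Tr p τ p'

/-- Optional step `p →(α) p'`: a real `α`-step, or `α = τ` and `p = p'`. -/
def OptStep (Tr : Proc → Act → Proc → Prop) (τ : Act) (p : Proc) (α : Act) (p' : Proc) : Prop :=
  Tr p α p' ∨ (α = τ ∧ p = p')

/-- Lift of `→a` to sets. -/
def SetStep (Tr : Proc → Act → Proc → Prop) (Q : Set Proc) (a : Act) (Q' : Set Proc) : Prop :=
  Q' = {q' | ∃ q ∈ Q, Tr q a q'}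

/-- Lift of `↠` to sets. -/
def SetStar (Tr : Proc → Act → Proc → Prop) (τ : Act) (Q Q' : Set Proc) : Prop :=
  Q' = {q' | ∃ q ∈ Q, Star Tr τ q q'}

/-- Lift of `→(α)` to sets. -/
def SetOpt (Tr : Proc → Act → Proc → Prop) (τ : Act) (Q : Set Proc) (α : Act)
    (Q' : Set Proc) : Prop :=
  Q' = {q' | ∃ q ∈ Q, OptStep Tr τ q α q'}

end LTS

/-! ### The logic HML_srbb -/

mutual
/-- Formulas `φ` of HML_srbb: `⟨ε⟩χ` or immediate conjunctions `⋀Ψ`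
(conjunctions are indexed by an arbitrary type). `⊤` is the empty conjunction. -/
inductive Formula (Act : Type) (τ : Act) : Type 1
  | delayed : DFormula Act τ → Formula Act τ
  | conj : (I : Type) → (I → Conjunct Act τ) → Formula Act τ

/-- Delayed formulas `χ`: observations `⟨a⟩φ` (with `a ≠ τ`), standard
conjunctions `⋀Ψ`, stable conjunctions `⋀({¬⟨τ⟩⊤} ∪ Ψ)`, and branching
conjunctions `⋀({(α)φ} ∪ Ψ)`. -/
inductive DFormula (Act : Type) (τ : Act) : Type 1
  | obs : (a : Act) → a ≠ τ → Formula Act τ → DFormula Act τ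
  | conj : (I : Type) → (I → Conjunct Act τ) → DFormula Act τ
  | stableConj : (I : Type) → (I → Conjunct Act τ) → DFormula Act τ
  | branchConj : (α : Act) → Formula Act τ → (I : Type) → (I → Conjunct Act τ) → DFormula Act τ

/-- Conjuncts `ψ`: positive `⟨ε⟩χ` or negative `¬⟨ε⟩χ`. -/
inductive Conjunct (Act : Type) (τ : Act) : Type 1
  | pos : DFormula Act τ → Conjunct Act τ
  | neg : DFormula Act τ → Conjunct Act τ
end

section Semantics

variable {Proc Act : Type}

mutual
/-- Semantics `⟦φ⟧`. -/
def Sat (Tr : Proc → Act → Proc → Prop) (τ : Act) (p : Proc) : Formula Act τ → Prop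
  | .delayed χ => ∃ p', Star Tr τ p p' ∧ SatD Tr τ p' χ
  | .conj _ ps => ∀ i, SatC Tr τ p (ps i)

/-- Semantics `⟦χ⟧^ε` of delayed formulas. -/
def SatD (Tr : Proc → Act → Proc → Prop) (τ : Act) (p : Proc) : DFormula Act τ → Prop
  | .obs a _ φ => ∃ p', Tr p a p' ∧ Sat Tr τ p' φ
  | .conj _ ps => ∀ i, SatC Tr τ p (ps i)
  | .stableConj _ ps => Stable Tr τ p ∧ ∀ i, SatC Tr τ p (ps i)
  | .branchConj α φ _ ps =>
      (∃ p', OptStep Tr τ p α p' ∧ Sat Tr τ p' φ) ∧ ∀ i, SatC Tr τ p (ps i)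

/-- Semantics `⟦ψ⟧^∧` of conjuncts. -/
def SatC (Tr : Proc → Act → Proc → Prop) (τ : Act) (p : Proc) : Conjunct Act τ → Prop
  | .pos χ => ∃ p', Star Tr τ p p' ∧ SatD Tr τ p' χ
  | .neg χ => ¬ ∃ p', Star Tr τ p p' ∧ SatD Tr τ p' χ
end

/-- `φ` distinguishes `p` from the set `Q`. -/
def Distinguishes (Tr : Proc → Act → Proc → Prop) (τ : Act) (φ : Formula Act τ)
    (p : Proc) (Q : Set Proc) : Prop :=
  Sat Tr τ p φ ∧ ∀ q ∈ Q, ¬ Sat Tr τ q φ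

/-- The delayed formula `χ` distinguishes `p` from the set `Q` w.r.t. `⟦·⟧^ε`. -/
def DistinguishesD (Tr : Proc → Act → Proc → Prop) (τ : Act) (χ : DFormula Act τ)
    (p : Proc) (Q : Set Proc) : Prop :=
  SatD Tr τ p χ ∧ ∀ q ∈ Q, ¬ SatD Tr τ q χ

/-- The conjunct `ψ` distinguishes `p` from `q` w.r.t. `⟦·⟧^∧`. -/
def DistinguishesC (Tr : Proc → Act → Proc → Prop) (τ : Act) (ψ : Conjunct Act τ)
    (p q : Proc) : Prop :=
  SatC Tr τ p ψ ∧ ¬ SatC Tr τ q ψ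

/-- Stability-respecting branching bisimulations: symmetric relations with the
branching-bisimulation transfer property and the stability-respecting
property. -/
def IsSRBBisim (Tr : Proc → Act → Proc → Prop) (τ : Act) (R : Proc → Proc → Prop) : Prop :=
  Symmetric R ∧
  (∀ p q, R p q → ∀ α p', Tr p α p' →
    (α = τ ∧ R p' q) ∨
      ∃ q' q'', Star Tr τ q q' ∧ Tr q' α q'' ∧ R p q' ∧ R p' q'') ∧
  (∀ p q, R p q → Stable Tr τ p →
    ∃ q', Star Tr τ q q' ∧ Stable Tr τ q' ∧ R p q')

end Semantics

/-! ### Expressiveness prices -/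

section Expr

variable {Act : Type} {τ : Act}

mutual
/-- Expressiveness price `expr` of formulas. -/
def exprF : Formula Act τ → Energy
  | .delayed χ => exprE χ
  | .conj I ps => ⨆ _ : Nonempty I, ((unitE 4 + unitE 2) + ⨆ i, exprC (ps i))

/-- Expressiveness price `expr^ε` of delayed formulas. -/
def exprE : DFormula Act τ → Energy
  | .obs _ _ φ => unitE 0 + exprF φ
  | .conj I ps => ⨆ _ : Nonempty I, (unitE 2 + ⨆ i, exprC (ps i))
  | .stableConj _ ps => unitE 3 + ⨆ i, exprC (ps i)
  | .branchConj _ φ _ ps =>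
      (unitE 1 + unitE 2) +
        (((unitE 0 + exprF φ) ⊔ onlyAt 5 (1 + exprF φ 0)) ⊔ ⨆ i, exprC (ps i))

/-- Expressiveness price `expr^∧` of conjuncts. -/
def exprC : Conjunct Act τ → Energy
  | .pos χ => exprE χ ⊔ onlyAt 5 (exprE χ 0)
  | .neg χ => (unitE 7 + exprE χ) ⊔ onlyAt 6 (exprE χ 0)
end

end Expr

/-! ### The weak spectroscopy energy game -/

/-- Positions of the weak spectroscopy game. -/
inductive GPos (Proc Act : Type) : Type
  | att (p : Proc) (Q : Set Proc)                                 -- `[p,Q]_a`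
  | attD (p : Proc) (Q : Set Proc)                                -- `[p,Q]^ε_a`
  | attC (p q : Proc)                                             -- `[p,q]^∧_a`
  | attB (p : Proc) (Q : Set Proc)                                -- `[p,Q]^η_a`
  | defC (p : Proc) (Q : Set Proc)                                -- `(p,Q)_d`
  | defS (p : Proc) (Q : Set Proc)                                -- `(p,Q)^s_d`
  | defB (p : Proc) (α : Act) (p' : Proc) (Q Qa : Set Proc)       -- `(p,α,p',Q,Qa)^η_d`

/-- The zero update. -/
def zeroU : Update := fun _ => UpdComp.zero

/-- The update `-ê_i`. -/
def decU (i : Fin 8) : Update := fun k => if k = i then UpdComp.decr else UpdComp.zero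

/-- The update `(min_{1,6},0,0,0,0,0,0,0)`. -/
def minU16 : Update := fun k => if k = 0 then UpdComp.minWith {5} else UpdComp.zero

/-- The update `(min_{1,7},0,0,0,0,0,0,-1)`. -/
def minU17dec8 : Update := fun k =>
  if k = 0 then UpdComp.minWith {6} else if k = 7 then UpdComp.decr else UpdComp.zero

/-- The update `(0,-1,-1,0,0,0,0,0)`. -/
def dec23 : Update := fun k => if k = 1 ∨ k = 2 then UpdComp.decr else UpdComp.zero

/-- The update `(min_{1,6},-1,-1,0,0,0,0,0)`. -/
def minU16dec23 : Update := fun k =>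
  if k = 0 then UpdComp.minWith {5}
  else if k = 1 ∨ k = 2 then UpdComp.decr else UpdComp.zero

section Game

variable {Proc Act : Type}

/-- Moves of the weak spectroscopy game. -/
inductive GMove (Tr : Proc → Act → Proc → Prop) (τ : Act) :
    GPos Proc Act → Update → GPos Proc Act → Prop
  | delay {p : Proc} {Q Q' : Set Proc} :
      SetStar Tr τ Q Q' →
      GMove Tr τ (.att p Q) zeroU (.attD p Q')
  | procrastination {p p' : Proc} {Q : Set Proc} :
      Tr p τ p' → p ≠ p' →
      GMove Tr τ (.attD p Q) zeroU (.attD p' Q)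
  | observation {p p' : Proc} {a : Act} {Q Q' : Set Proc} :
      Tr p a p' → a ≠ τ → SetStep Tr Q a Q' →
      GMove Tr τ (.attD p Q) (decU 0) (.att p' Q')
  | finishing {p : Proc} :
      GMove Tr τ (.att p ∅) zeroU (.defC p ∅)
  | immediateConj {p : Proc} {Q : Set Proc} :
      Q ≠ ∅ →
      GMove Tr τ (.att p Q) (decU 4) (.defC p Q)
  | lateConj {p : Proc} {Q : Set Proc} :
      GMove Tr τ (.attD p Q) zeroU (.defC p Q)
  | conjAnswer {p q : Proc} {Q : Set Proc} :
      q ∈ Q →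
      GMove Tr τ (.defC p Q) (decU 2) (.attC p q)
  | posConjunct {p q : Proc} {Q : Set Proc} :
      SetStar Tr τ {q} Q →
      GMove Tr τ (.attC p q) minU16 (.attD p Q)
  | negConjunct {p q : Proc} {Q : Set Proc} :
      SetStar Tr τ {p} Q → p ≠ q →
      GMove Tr τ (.attC p q) minU17dec8 (.attD q Q)
  | stableConj {p : Proc} {Q : Set Proc} :
      Stable Tr τ p →
      GMove Tr τ (.attD p Q) zeroU (.defS p {q ∈ Q | Stable Tr τ q})
  | conjStableAnswer {p q : Proc} {Q : Set Proc} :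
      q ∈ Q →
      GMove Tr τ (.defS p Q) (decU 3) (.attC p q)
  | stableFinishing {p : Proc} :
      GMove Tr τ (.defS p ∅) (decU 3) (.defC p ∅)
  | branchConj {p p' : Proc} {α : Act} {Q Qa : Set Proc} :
      OptStep Tr τ p α p' → Qa ⊆ Q →
      GMove Tr τ (.attD p Q) zeroU (.defB p α p' (Q \ Qa) Qa)
  | branchAnswer {p p' q : Proc} {α : Act} {Q Qa : Set Proc} :
      q ∈ Q →
      GMove Tr τ (.defB p α p' Q Qa) dec23 (.attC p q)
  | branchObservation {p p' : Proc} {α : Act} {Q Qa Q' : Set Proc} :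
      SetOpt Tr τ Qa α Q' →
      GMove Tr τ (.defB p α p' Q Qa) minU16dec23 (.attB p' Q')
  | branchAccounting {p : Proc} {Q : Set Proc} :
      GMove Tr τ (.attB p Q) (decU 0) (.att p Q)

/-- Defender positions of the weak spectroscopy game. -/
def isDefender : GPos Proc Act → Prop
  | .defC _ _ => True
  | .defS _ _ => True
  | .defB _ _ _ _ _ => True
  | _ => False

/-- The weak spectroscopy energy game `G△`. -/
def specGame (Tr : Proc → Act → Proc → Prop) (τ : Act) : EGame (GPos Proc Act) where
  defender := isDefender
  move := GMove Tr τ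

end Game

/-! ### Strategy formulas -/

section Strat

variable {Proc Act : Type}

mutual
/-- Attacker strategy formulas (formula sort). -/
inductive StratF (Tr : Proc → Act → Proc → Prop) (τ : Act) :
    GPos Proc Act → Energy → Formula Act τ → Prop
  | delay {p : Proc} {Q Q' : Set Proc} {u : Update} {e e' : Energy} {χ : DFormula Act τ} :
      GMove Tr τ (.att p Q) u (.attD p Q') →
      upd e u = some e' →
      (specGame Tr τ).Win (.attD p Q') e' →
      StratD Tr τ (.attD p Q') e' χ →
      StratF Tr τ (.att p Q) e (.delayed χ)
  | immediateConj {p : Proc} {Q : Set Proc} {u : Update} {e e' : Energy}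
      {I : Type} {ps : I → Conjunct Act τ} :
      GMove Tr τ (.att p Q) u (.defC p Q) →
      upd e u = some e' →
      (specGame Tr τ).Win (.defC p Q) e' →
      StratD Tr τ (.defC p Q) e' (.conj I ps) →
      StratF Tr τ (.att p Q) e (.conj I ps)

/-- Attacker strategy formulas (delayed-formula sort). -/
inductive StratD (Tr : Proc → Act → Proc → Prop) (τ : Act) :
    GPos Proc Act → Energy → DFormula Act τ → Prop
  | procrastination {p p' : Proc} {Q : Set Proc} {u : Update} {e e' : Energy}
      {χ : DFormula Act τ} :
      GMove Tr τ (.attD p Q) u (.attD p' Q) →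
      upd e u = some e' →
      (specGame Tr τ).Win (.attD p' Q) e' →
      StratD Tr τ (.attD p' Q) e' χ →
      StratD Tr τ (.attD p Q) e χ
  | observation {p p' : Proc} {a : Act} {Q Q' : Set Proc} {u : Update} {e e' : Energy}
      {φ : Formula Act τ} (ha : a ≠ τ) :
      GMove Tr τ (.attD p Q) u (.att p' Q') →
      Tr p a p' → SetStep Tr Q a Q' →
      upd e u = some e' →
      (specGame Tr τ).Win (.att p' Q') e' →
      StratF Tr τ (.att p' Q') e' φ →
      StratD Tr τ (.attD p Q) e (.obs a ha φ)
  | lateConj {p : Proc} {Q : Set Proc} {u : Update} {e e' : Energy} {χ : DFormula Act τ} :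
      GMove Tr τ (.attD p Q) u (.defC p Q) →
      upd e u = some e' →
      (specGame Tr τ).Win (.defC p Q) e' →
      StratD Tr τ (.defC p Q) e' χ →
      StratD Tr τ (.attD p Q) e χ
  | stable {p : Proc} {Q Q' : Set Proc} {u : Update} {e e' : Energy} {χ : DFormula Act τ} :
      GMove Tr τ (.attD p Q) u (.defS p Q') →
      upd e u = some e' →
      (specGame Tr τ).Win (.defS p Q') e' →
      StratD Tr τ (.defS p Q') e' χ →
      StratD Tr τ (.attD p Q) e χ
  | branch {p p' : Proc} {α : Act} {Q Q' Qa : Set Proc} {u : Update} {e e' : Energy}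
      {χ : DFormula Act τ} :
      GMove Tr τ (.attD p Q) u (.defB p α p' Q' Qa) →
      upd e u = some e' →
      (specGame Tr τ).Win (.defB p α p' Q' Qa) e' →
      StratD Tr τ (.defB p α p' Q' Qa) e' χ →
      StratD Tr τ (.attD p Q) e χ
  | conj {p : Proc} {Q : Set Proc} {e : Energy}
      (us : {q // q ∈ Q} → Update) (es : {q // q ∈ Q} → Energy)
      (ψs : {q // q ∈ Q} → Conjunct Act τ) :
      (∀ qq : {q // q ∈ Q}, GMove Tr τ (.defC p Q) (us qq) (.attC p qq.1)) →
      (∀ qq : {q // q ∈ Q}, upd e (us qq) = some (es qq)) →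
      (∀ qq : {q // q ∈ Q}, (specGame Tr τ).Win (.attC p qq.1) (es qq)) →
      (∀ qq : {q // q ∈ Q}, StratC Tr τ (.attC p qq.1) (es qq) (ψs qq)) →
      StratD Tr τ (.defC p Q) e (.conj {q // q ∈ Q} ψs)
  | stableConj {p : Proc} {Q : Set Proc} {e : Energy}
      (hne : Q.Nonempty)
      (us : {q // q ∈ Q} → Update) (es : {q // q ∈ Q} → Energy)
      (ψs : {q // q ∈ Q} → Conjunct Act τ) :
      (∀ qq : {q // q ∈ Q}, GMove Tr τ (.defS p Q) (us qq) (.attC p qq.1)) →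
      (∀ qq : {q // q ∈ Q}, upd e (us qq) = some (es qq)) →
      (∀ qq : {q // q ∈ Q}, (specGame Tr τ).Win (.attC p qq.1) (es qq)) →
      (∀ qq : {q // q ∈ Q}, StratC Tr τ (.attC p qq.1) (es qq) (ψs qq)) →
      StratD Tr τ (.defS p Q) e (.stableConj {q // q ∈ Q} ψs)
  | stableFinish {p : Proc} {u : Update} {e e' : Energy} :
      GMove Tr τ (.defS p ∅) u (.defC p ∅) →
      upd e u = some e' →
      (specGame Tr τ).Win (.defC p (∅ : Set Proc)) e' →
      StratD Tr τ (.defS p ∅) e (.stableConj Empty fun x => x.elim)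
  | branchConj {p p' : Proc} {α : Act} {Q Qa Q' : Set Proc} {ua ua' : Update}
      {e e1 ea : Energy} {φa : Formula Act τ}
      (us : {q // q ∈ Q} → Update) (es : {q // q ∈ Q} → Energy)
      (ψs : {q // q ∈ Q} → Conjunct Act τ) :
      GMove Tr τ (.defB p α p' Q Qa) ua (.attB p' Q') →
      GMove Tr τ (.attB p' Q') ua' (.att p' Q') →
      upd e ua = some e1 →
      upd e1 ua' = some ea →
      (specGame Tr τ).Win (.att p' Q') ea →
      StratF Tr τ (.att p' Q') ea φa →
      (∀ qq : {q // q ∈ Q}, GMove Tr τ (.defB p α p' Q Qa) (us qq) (.attC p qq.1)) →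
      (∀ qq : {q // q ∈ Q}, upd e (us qq) = some (es qq)) →
      (∀ qq : {q // q ∈ Q}, (specGame Tr τ).Win (.attC p qq.1) (es qq)) →
      (∀ qq : {q // q ∈ Q}, StratC Tr τ (.attC p qq.1) (es qq) (ψs qq)) →
      StratD Tr τ (.defB p α p' Q Qa) e (.branchConj α φa {q // q ∈ Q} ψs)

/-- Attacker strategy formulas (conjunct sort). -/
inductive StratC (Tr : Proc → Act → Proc → Prop) (τ : Act) :
    GPos Proc Act → Energy → Conjunct Act τ → Prop
  | pos {p q : Proc} {Q' : Set Proc} {u : Update} {e e' : Energy} {χ : DFormula Act τ} :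
      GMove Tr τ (.attC p q) u (.attD p Q') →
      upd e u = some e' →
      (specGame Tr τ).Win (.attD p Q') e' →
      StratD Tr τ (.attD p Q') e' χ →
      StratC Tr τ (.attC p q) e (.pos χ)
  | neg {p q : Proc} {P' : Set Proc} {u : Update} {e e' : Energy} {χ : DFormula Act τ} :
      GMove Tr τ (.attC p q) u (.attD q P') →
      upd e u = some e' →
      (specGame Tr τ).Win (.attD q P') e' →
      StratD Tr τ (.attD q P') e' χ →
      StratC Tr τ (.attC p q) e (.neg χ)
end

end Strat

/-!
Induction on the derivation of `e ∈ Win_a`, showing at every position at once that the budget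
admits a strategy formula of price at most the budget. Each move builds one formula constructor,
and its update pays for that constructor's price increment: the `-1` components pay for the unit
vectors added by `expr`, and the `min_{1,6}` / `min_{1,7}` components bound the observation
depth that `expr^∧` copies into the sixth and seventh components.
-/

section Energy

def decrPart (u : Update) : Energy := fun k => if u k = UpdComp.decr then 1 else 0

variable {e e' : Energy} {u : Update}

lemma upd_zeroU (e : Energy) : upd e zeroU = some e := by
  simp [upd, zeroU]

lemma upd_apply (h : upd e u = some e') (k : Fin 8) :
    e' k = match u k with
      | UpdComp.decr => e k - 1
      | UpdComp.zero => e k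
      | UpdComp.minWith D => (insert k D).inf e := by
  unfold upd at h
  split_ifs at h
  cases h
  rfl

lemma ne_zero_of_upd (h : upd e u = some e') {k : Fin 8} (hk : u k = UpdComp.decr) :
    e k ≠ 0 := by
  unfold upd at h
  split_ifs at h with hdef
  exact hdef k hk

lemma upd_le (h : upd e u = some e') : e' ≤ e := by
  intro k
  rw [upd_apply h k]
  split
  · exact tsub_le_self
  · exact le_rfl
  · exact Finset.inf_le (Finset.mem_insert_self k _)

lemma decrPart_le_of_upd (h : upd e u = some e') : decrPart u ≤ e := by
  intro k
  unfold decrPart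
  split_ifs with hk
  · exact Order.one_le_iff_ne_zero.mpr (ne_zero_of_upd h hk)
  · exact zero_le

lemma le_tsub_decrPart_of_upd (h : upd e u = some e') : e' ≤ e - decrPart u := by
  intro k
  simp only [Pi.sub_apply, decrPart]
  split_ifs with hk
  · rw [upd_apply h k, hk]
  · rw [tsub_zero]
    exact upd_le h k

lemma decrPart_add_le_of_upd (h : upd e u = some e') {x : Energy} (hx : x ≤ e') :
    decrPart u + x ≤ e :=
  add_le_of_le_tsub_left_of_le (decrPart_le_of_upd h) (hx.trans (le_tsub_decrPart_of_upd h))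

lemma upd_apply_le_apply_of_minWith (h : upd e u = some e') {k j : Fin 8} {D : Finset (Fin 8)}
    (hk : u k = UpdComp.minWith D) (hj : j ∈ D) (hj0 : u j = UpdComp.zero) : e' k ≤ e' j := by
  rw [upd_apply h k, upd_apply h j, hk, hj0]
  exact Finset.inf_le (Finset.mem_insert_of_mem hj)

lemma decrPart_decU (i : Fin 8) : decrPart (decU i) = unitE i := by
  ext k
  by_cases hk : k = i <;> simp [decrPart, decU, unitE, hk]

lemma decrPart_minU17dec8 : decrPart minU17dec8 = unitE 7 := by
  ext k
  fin_cases k <;> rfl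

lemma decrPart_dec23 : decrPart dec23 = unitE 1 + unitE 2 := by
  ext k
  fin_cases k <;> rfl

lemma decrPart_minU16dec23 : decrPart minU16dec23 = unitE 1 + unitE 2 := by
  ext k
  fin_cases k <;> rfl

lemma onlyAt_le {j : Fin 8} {v : ℕ∞} (h : v ≤ e j) : onlyAt j v ≤ e := by
  intro k
  unfold onlyAt
  split_ifs with hk
  · exact hk ▸ h
  · exact zero_le

end Energy

lemma exprF_conj_le {Act : Type} {τ : Act} (I : Type) (ps : I → Conjunct Act τ) :
    exprF (τ := τ) (.conj I ps) ≤ unitE 4 + exprE (.conj I ps) := by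
  by_cases hI : Nonempty I
  · rw [exprF, exprE, iSup_pos hI, iSup_pos hI, add_assoc]
  · rw [exprF, iSup_neg hI]
    exact bot_le

section Strategies

variable {Proc Act : Type} {Tr : Proc → Act → Proc → Prop} {τ : Act}

/-- At `[p,Q]^η_a` the formula is the one reached after the accounting move, and at `(p,Q)_d` it is
a plain conjunction, since that is the shape the rules for `StratF` and `StratD` consume. -/
def PricedStrategy (Tr : Proc → Act → Proc → Prop) (τ : Act) : GPos Proc Act → Energy → Prop
  | .att p Q, e => ∃ φ : Formula Act τ, StratF Tr τ (.att p Q) e φ ∧ exprF φ ≤ e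
  | .attD p Q, e => ∃ χ : DFormula Act τ, StratD Tr τ (.attD p Q) e χ ∧ exprE χ ≤ e
  | .attC p q, e => ∃ ψ : Conjunct Act τ, StratC Tr τ (.attC p q) e ψ ∧ exprC ψ ≤ e
  | .attB p Q, e => ∃ (ea : Energy) (φ : Formula Act τ),
      upd e (decU 0) = some ea ∧ (specGame Tr τ).Win (.att p Q) ea ∧
      StratF Tr τ (.att p Q) ea φ ∧ exprF φ ≤ ea
  | .defC p Q, e => ∃ ψs : {q // q ∈ Q} → Conjunct Act τ,
      StratD Tr τ (.defC p Q) e (.conj _ ψs) ∧ exprE (DFormula.conj _ ψs) ≤ e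
  | .defS p Q, e => ∃ χ : DFormula Act τ, StratD Tr τ (.defS p Q) e χ ∧ exprE χ ≤ e
  | .defB p α p' Q Qa, e => ∃ χ : DFormula Act τ,
      StratD Tr τ (.defB p α p' Q Qa) e χ ∧ exprE χ ≤ e

lemma pricedStrategy_of_attack {g g' : GPos Proc Act} {u : Update} {e e' : Energy}
    (hatt : ¬ isDefender g) (hmv : GMove Tr τ g u g') (hupd : upd e u = some e')
    (hwin : (specGame Tr τ).Win g' e') (ih : PricedStrategy Tr τ g' e') :
    PricedStrategy Tr τ g e := by
  have hzero : u = zeroU → e' = e := by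
    rintro rfl
    rw [upd_zeroU] at hupd
    exact (Option.some_injective _ hupd).symm
  cases hmv with
  | delay hss =>
    obtain ⟨χ, hχ, hle⟩ := ih
    exact ⟨.delayed χ, .delay (.delay hss) hupd hwin hχ, hzero rfl ▸ hle⟩
  | procrastination htr hne =>
    obtain ⟨χ, hχ, hle⟩ := ih
    exact ⟨χ, .procrastination (.procrastination htr hne) hupd hwin hχ, hzero rfl ▸ hle⟩
  | observation htr ha hss =>
    obtain ⟨φ, hφ, hle⟩ := ih
    refine ⟨.obs _ ha φ, .observation ha (.observation htr ha hss) htr hss hupd hwin hφ, ?_⟩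
    simpa only [exprE, decrPart_decU] using decrPart_add_le_of_upd hupd hle
  | finishing =>
    obtain ⟨ψs, hstrat, -⟩ := ih
    refine ⟨.conj _ ψs, .immediateConj .finishing hupd hwin hstrat, ?_⟩
    rw [exprF, iSup_neg (by simp)]
    exact bot_le
  | immediateConj hQ =>
    obtain ⟨ψs, hstrat, hle⟩ := ih
    refine ⟨.conj _ ψs, .immediateConj (.immediateConj hQ) hupd hwin hstrat, ?_⟩
    refine (exprF_conj_le _ _).trans ?_
    simpa only [decrPart_decU] using decrPart_add_le_of_upd hupd hle
  | lateConj =>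
    obtain ⟨ψs, hstrat, hle⟩ := ih
    exact ⟨.conj _ ψs, .lateConj .lateConj hupd hwin hstrat, hzero rfl ▸ hle⟩
  | posConjunct hss =>
    obtain ⟨χ, hχ, hle⟩ := ih
    refine ⟨.pos χ, .pos (.posConjunct hss) hupd hwin hχ,
      sup_le (hle.trans (upd_le hupd)) (onlyAt_le ?_)⟩
    calc exprE χ 0 ≤ e' 0 := hle 0
      _ ≤ e' 5 := upd_apply_le_apply_of_minWith hupd rfl (by simp) rfl
      _ ≤ e 5 := upd_le hupd 5
  | negConjunct hss hpq =>
    obtain ⟨χ, hχ, hle⟩ := ih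
    refine ⟨.neg χ, .neg (.negConjunct hss hpq) hupd hwin hχ, sup_le ?_ (onlyAt_le ?_)⟩
    · simpa only [decrPart_minU17dec8] using decrPart_add_le_of_upd hupd hle
    · calc exprE χ 0 ≤ e' 0 := hle 0
        _ ≤ e' 6 := upd_apply_le_apply_of_minWith hupd rfl (by simp) rfl
        _ ≤ e 6 := upd_le hupd 6
  | stableConj hstable =>
    obtain ⟨χ, hχ, hle⟩ := ih
    exact ⟨χ, .stable (.stableConj hstable) hupd hwin hχ, hzero rfl ▸ hle⟩
  | branchConj hopt hsub =>
    obtain ⟨χ, hχ, hle⟩ := ih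
    exact ⟨χ, .branch (.branchConj hopt hsub) hupd hwin hχ, hzero rfl ▸ hle⟩
  | branchAccounting =>
    obtain ⟨φ, hφ, hle⟩ := ih
    exact ⟨e', φ, hupd, hwin, hφ, hle⟩
  | conjAnswer | conjStableAnswer | stableFinishing | branchAnswer | branchObservation =>
    exact absurd trivial hatt

lemma exists_priced_conjuncts {g : GPos Proc Act} {u : Update} {p : Proc} {Q : Set Proc}
    {e : Energy} (hanswer : ∀ q ∈ Q, GMove Tr τ g u (.attC p q))
    (hmoves : ∀ u g', GMove Tr τ g u g' →
      ∃ e', upd e u = some e' ∧ (specGame Tr τ).Win g' e' ∧ PricedStrategy Tr τ g' e') :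
    ∃ (es : {q // q ∈ Q} → Energy) (ψs : {q // q ∈ Q} → Conjunct Act τ),
      (∀ qq, upd e u = some (es qq)) ∧ (∀ qq, (specGame Tr τ).Win (.attC p qq.1) (es qq)) ∧
      (∀ qq, StratC Tr τ (.attC p qq.1) (es qq) (ψs qq)) ∧
      ∀ qq, exprC (ψs qq) ≤ e - decrPart u := by
  have h : ∀ qq : {q // q ∈ Q}, ∃ (e' : Energy) (ψ : Conjunct Act τ),
      upd e u = some e' ∧ (specGame Tr τ).Win (.attC p qq.1) e' ∧
      StratC Tr τ (.attC p qq.1) e' ψ ∧ exprC ψ ≤ e - decrPart u := fun qq => by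
    obtain ⟨e', hupd, hwin, ψ, hψ, hle⟩ := hmoves _ _ (hanswer qq.1 qq.2)
    exact ⟨e', ψ, hupd, hwin, hψ, hle.trans (le_tsub_decrPart_of_upd hupd)⟩
  choose es ψs hupd hwin hψ hle using h
  exact ⟨es, ψs, hupd, hwin, hψ, hle⟩

lemma pricedStrategy_defC {p : Proc} {Q : Set Proc} {e : Energy}
    (hmoves : ∀ u g', GMove Tr τ (.defC p Q) u g' →
      ∃ e', upd e u = some e' ∧ (specGame Tr τ).Win g' e' ∧ PricedStrategy Tr τ g' e') :
    PricedStrategy Tr τ (.defC p Q) e := by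
  obtain ⟨es, ψs, hupd, hwin, hψ, hle⟩ :=
    exists_priced_conjuncts (fun _ hq => .conjAnswer hq) hmoves
  refine ⟨ψs, .conj _ es ψs (fun qq => .conjAnswer qq.2) hupd hwin hψ, ?_⟩
  rw [exprE]
  refine iSup_le fun ⟨qq⟩ => ?_
  rw [← decrPart_decU]
  exact add_le_of_le_tsub_left_of_le (decrPart_le_of_upd (hupd qq)) (iSup_le hle)

lemma pricedStrategy_defS {p : Proc} {Q : Set Proc} {e : Energy}
    (hmoves : ∀ u g', GMove Tr τ (.defS p Q) u g' →
      ∃ e', upd e u = some e' ∧ (specGame Tr τ).Win g' e' ∧ PricedStrategy Tr τ g' e') :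
    PricedStrategy Tr τ (.defS p Q) e := by
  rcases Q.eq_empty_or_nonempty with rfl | ⟨q, hq⟩
  · obtain ⟨e', hupd, hwin, -⟩ := hmoves _ _ .stableFinishing
    refine ⟨_, .stableFinish .stableFinishing hupd hwin, ?_⟩
    rw [exprE, iSup_of_empty, bot_eq_zero, add_zero, ← decrPart_decU]
    exact decrPart_le_of_upd hupd
  · obtain ⟨es, ψs, hupd, hwin, hψ, hle⟩ :=
      exists_priced_conjuncts (fun _ hq => .conjStableAnswer hq) hmoves
    refine ⟨_, .stableConj ⟨q, hq⟩ _ es ψs (fun qq => .conjStableAnswer qq.2) hupd hwin hψ, ?_⟩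
    rw [exprE, ← decrPart_decU]
    exact add_le_of_le_tsub_left_of_le (decrPart_le_of_upd (hupd ⟨q, hq⟩)) (iSup_le hle)

lemma pricedStrategy_defB {p p' : Proc} {α : Act} {Q Qa : Set Proc} {e : Energy}
    (hmoves : ∀ u g', GMove Tr τ (.defB p α p' Q Qa) u g' →
      ∃ e', upd e u = some e' ∧ (specGame Tr τ).Win g' e' ∧ PricedStrategy Tr τ g' e') :
    PricedStrategy Tr τ (.defB p α p' Q Qa) e := by
  obtain ⟨e1, hupd1, -, ea, φa, hupda, hwina, hφa, hlea⟩ :=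
    hmoves _ _ (.branchObservation rfl)
  obtain ⟨es, ψs, hupd, hwin, hψ, hle⟩ :=
    exists_priced_conjuncts (fun _ hq => .branchAnswer hq) hmoves
  refine ⟨_, .branchConj _ es ψs (.branchObservation rfl) .branchAccounting hupd1 hupda hwina
    hφa (fun qq => .branchAnswer qq.2) hupd hwin hψ, ?_⟩
  have hobs : unitE 0 + exprF φa ≤ e1 := by
    simpa only [decrPart_decU] using decrPart_add_le_of_upd hupda hlea
  have hobs0 : 1 + exprF φa 0 ≤ e1 5 :=
    calc 1 + exprF φa 0 = (unitE 0 + exprF φa) 0 := by simp [unitE]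
      _ ≤ e1 0 := hobs 0
      _ ≤ e1 5 := upd_apply_le_apply_of_minWith hupd1 rfl (by simp) rfl
  rw [exprE, ← decrPart_minU16dec23]
  refine add_le_of_le_tsub_left_of_le (decrPart_le_of_upd hupd1)
    (sup_le (sup_le ?_ (onlyAt_le ?_)) (iSup_le ?_))
  · exact hobs.trans (le_tsub_decrPart_of_upd hupd1)
  · exact hobs0.trans (le_tsub_decrPart_of_upd hupd1 5)
  · simpa only [decrPart_dec23, decrPart_minU16dec23] using hle

theorem pricedStrategy_of_win {g : GPos Proc Act} {e : Energy} (h : (specGame Tr τ).Win g e) :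
    PricedStrategy Tr τ g e := by
  induction h with
  | attack hatt hmv hupd hwin ih => exact pricedStrategy_of_attack hatt hmv hupd hwin ih
  | @defend g e hdef hafford hwin ih =>
    have hmoves : ∀ u g', GMove Tr τ g u g' →
        ∃ e', upd e u = some e' ∧ (specGame Tr τ).Win g' e' ∧ PricedStrategy Tr τ g' e' :=
      fun u g' hmv =>
        have ⟨e', hupd⟩ := Option.ne_none_iff_exists'.mp (hafford u g' hmv)
        ⟨e', hupd, hwin u g' e' hmv hupd, ih u g' e' hmv hupd⟩
    cases g with
    | defC => exact pricedStrategy_defC hmoves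
    | defS => exact pricedStrategy_defS hmoves
    | defB => exact pricedStrategy_defB hmoves
    | att | attD | attC | attB => exact hdef.elim

end Strategies

/-- winning budgets at `[p,Q]^ε_a` yield delayed strategy
formulas of price at most `e`. -/
theorem win_implies_strategy_formula_delayed {Proc Act : Type}
    (Tr : Proc → Act → Proc → Prop) (τ : Act) (p : Proc) (Q : Set Proc) (e : Energy)
    (h : (specGame Tr τ).Win (.attD p Q) e) :
    ∃ χ : DFormula Act τ, StratD Tr τ (.attD p Q) e χ ∧ exprE χ ≤ e :=
  pricedStrategy_of_win h

end Spectroscopy
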